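/- arXiv:2003.03058 — 4 statements merged into one kernel-verified Lean document; each statement's English description precedes it below -/
import Mathlib

section
/- For all real numbers Δ and s with 1 ≤ Δ ≤ s, it holds that s·(1 - 1/Δ)^{s} ≤ Δ. -/
/-- For all real numbers `Δ` and `s` with `1 ≤ Δ ≤ s`,
`s·(1 - 1/Δ)^s ≤ Δ` (real power). -/
theorem soft_hitting_expectation_core
    (Δ s : ℝ) (hΔ : 1 ≤ Δ) (hs : Δ ≤ s) :
    s * (1 - 1 / Δ) ^ s ≤ Δ := by
  have hΔ0 : 0 < Δ := lt_of_lt_of_le one_pos hΔ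
  have hs0 : 0 < s := lt_of_lt_of_le hΔ0 hs
  have hb : 0 ≤ 1 - 1 / Δ := by
    have : 1 / Δ ≤ 1 := by
      rw [div_le_one hΔ0]; exact hΔ
    linarith
  have h1 : 1 - 1 / Δ ≤ Real.exp (-(1 / Δ)) := by
    have := Real.add_one_le_exp (-(1 / Δ))
    linarith
  have h2 : (1 - 1 / Δ) ^ s ≤ Real.exp (-(1 / Δ)) ^ s :=
    Real.rpow_le_rpow hb h1 hs0.le
  have h3 : Real.exp (-(1 / Δ)) ^ s = Real.exp (-(s / Δ)) := by
    rw [← Real.exp_mul]; ring_nf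
  rw [h3] at h2
  have h4 : s * Real.exp (-(s / Δ)) ≤ Δ := by
    have hx : s / Δ ≤ Real.exp (s / Δ) := by
      have := Real.add_one_le_exp (s / Δ)
      linarith
    have hexp : 0 < Real.exp (s / Δ) := Real.exp_pos _
    rw [Real.exp_neg]
    rw [mul_inv_le_iff₀ hexp]
    calc s = Δ * (s / Δ) := by field_simp
    _ ≤ Δ * Real.exp (s / Δ) := by nlinarith
  calc s * (1 - 1 / Δ) ^ s ≤ s * Real.exp (-(s / Δ)) := by
        exact mul_le_mul_of_nonneg_left h2 hs0.le
  _ ≤ Δ := h4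
end

section
/- Let R be a finite set with |R| = N, let L be a finite index set, let Δ ≥ 1 be an integer with Δ ≤ N, and for each u ∈ L let S_u ⊆ R satisfy |S_u| ≥ Δ. Then there exists a subset Z ⊆ R such that |Z| ≤ 3·N/Δ and ∑_{u ∈ L : S_u ∩ Z = ∅} |S_u| ≤ 3·Δ·|L|. -/
/-!
Keep each element of `R` independently with probability `p = 1/Δ`. The expected size of the
random set is `N/Δ`, and a set `S` of size `s` is missed with probability `(1 - p)^s`, so its
expected contribution is `s (1 - p)^s ≤ s e^{-ps} ≤ 1/p = Δ` (as `ps ≤ e^{ps}`). A nonnegative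
quantity exceeds twice its mean with probability less than `1/2`, so some outcome is within
twice the mean for both quantities at once.
-/

open Finset

section Markov

variable {β : Type*} {s : Finset β} {w f g : β → ℝ} {a b : ℝ}

theorem sum_filter_two_mul_lt_lt_half (hw : ∀ x ∈ s, 0 ≤ w x) (hf : ∀ x ∈ s, 0 ≤ f x)
    (hfa : ∑ x ∈ s, w x * f x ≤ a) :
    ∑ x ∈ s with 2 * a < f x, w x < 1 / 2 := by
  by_contra! hhalf
  have ha : 0 ≤ a := (sum_nonneg fun x hx => mul_nonneg (hw x hx) (hf x hx)).trans hfa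
  obtain ⟨x, hx, hwx⟩ : ∃ x ∈ s.filter (2 * a < f ·), 0 < w x := by
    by_contra! h
    linarith [sum_nonpos h]
  have hgap : ∑ x ∈ s with 2 * a < f x, w x * (2 * a) < ∑ x ∈ s with 2 * a < f x, w x * f x :=
    sum_lt_sum (fun y hy => mul_le_mul_of_nonneg_left (mem_filter.1 hy).2.le
      (hw y (mem_filter.1 hy).1)) ⟨x, hx, mul_lt_mul_of_pos_left (mem_filter.1 hx).2 hwx⟩
  have hsub : ∑ x ∈ s with 2 * a < f x, w x * f x ≤ ∑ x ∈ s, w x * f x :=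
    sum_le_sum_of_subset_of_nonneg (filter_subset _ _)
      fun y hy _ => mul_nonneg (hw y hy) (hf y hy)
  rw [← sum_mul] at hgap
  linarith [mul_le_mul_of_nonneg_right hhalf (by positivity : (0 : ℝ) ≤ 2 * a)]

theorem exists_le_two_mul_of_sum_mul_le (hw : ∀ x ∈ s, 0 ≤ w x) (hw1 : ∑ x ∈ s, w x = 1)
    (hf : ∀ x ∈ s, 0 ≤ f x) (hg : ∀ x ∈ s, 0 ≤ g x)
    (hfa : ∑ x ∈ s, w x * f x ≤ a) (hgb : ∑ x ∈ s, w x * g x ≤ b) :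
    ∃ x ∈ s, f x ≤ 2 * a ∧ g x ≤ 2 * b := by
  by_contra! h
  have hsub : s.filter (fun x => ¬ 2 * a < f x) ⊆ s.filter (2 * b < g ·) := fun x hx => by
    simp only [mem_filter, not_lt] at hx ⊢
    exact ⟨hx.1, h x hx.1 hx.2⟩
  have hsplit := sum_filter_add_sum_filter_not s (2 * a < f ·) w
  have hle := sum_le_sum_of_subset_of_nonneg hsub fun x hx _ => hw x (mem_filter.1 hx).1
  linarith [sum_filter_two_mul_lt_lt_half hw hf hfa, sum_filter_two_mul_lt_lt_half hw hg hgb]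

end Markov

theorem natCast_mul_one_sub_pow_le_inv {p : ℝ} (hp0 : 0 < p) (hp1 : p ≤ 1) (n : ℕ) :
    n * (1 - p) ^ n ≤ p⁻¹ := by
  have hexp : (1 - p) ^ n ≤ Real.exp (-(p * n)) :=
    calc (1 - p) ^ n ≤ Real.exp (-p) ^ n :=
          pow_le_pow_left₀ (sub_nonneg.2 hp1) (Real.one_sub_le_exp_neg p) n
      _ = Real.exp (-(p * n)) := by rw [← Real.exp_nat_mul]; ring_nf
  have hlin : p * n ≤ Real.exp (p * n) := by linarith [Real.add_one_le_exp (p * n)]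
  calc n * (1 - p) ^ n ≤ n * Real.exp (-(p * n)) := mul_le_mul_of_nonneg_left hexp n.cast_nonneg
    _ = p⁻¹ * (p * n / Real.exp (p * n)) := by rw [Real.exp_neg]; field_simp
    _ ≤ p⁻¹ := mul_le_of_le_one_right (inv_nonneg.2 hp0.le) ((div_le_one (Real.exp_pos _)).2 hlin)

section Bernoulli

variable {α : Type*}

/-- The probability that keeping each element of `R` independently with probability `p`
produces exactly `Z` (for `Z ⊆ R`). -/
def bernoulliWeight (R : Finset α) (p : ℝ) (Z : Finset α) : ℝ :=
  p ^ #Z * (1 - p) ^ (#R - #Z)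

theorem bernoulliWeight_nonneg (R : Finset α) {p : ℝ} (hp0 : 0 ≤ p) (hp1 : p ≤ 1)
    (Z : Finset α) : 0 ≤ bernoulliWeight R p Z :=
  mul_nonneg (pow_nonneg hp0 _) (pow_nonneg (sub_nonneg.2 hp1) _)

theorem sum_bernoulliWeight (R : Finset α) (p : ℝ) :
    ∑ Z ∈ R.powerset, bernoulliWeight R p Z = 1 := by
  simp [bernoulliWeight, sum_pow_mul_eq_add_pow]

variable [DecidableEq α]

theorem sum_bernoulliWeight_disjoint {R T : Finset α} (hT : T ⊆ R) (p : ℝ) :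
    ∑ Z ∈ R.powerset with Disjoint T Z, bernoulliWeight R p Z = (1 - p) ^ #T := by
  have hfilter : R.powerset.filter (Disjoint T ·) = (R \ T).powerset := by
    ext Z
    simp only [mem_filter, mem_powerset, subset_sdiff, disjoint_comm]
  have hweight : ∀ Z ∈ (R \ T).powerset,
      bernoulliWeight R p Z = (1 - p) ^ #T * bernoulliWeight (R \ T) p Z := by
    intro Z hZ
    have hZR := card_le_card (mem_powerset.1 hZ)
    have hTR := card_le_card hT
    rw [bernoulliWeight, bernoulliWeight, card_sdiff_of_subset hT]
    rw [card_sdiff_of_subset hT] at hZR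
    rw [show #R - #Z = (#R - #T - #Z) + #T by omega, pow_add]
    ring
  rw [hfilter, sum_congr rfl hweight, ← mul_sum, sum_bernoulliWeight, mul_one]

theorem sum_bernoulliWeight_mem {R : Finset α} {x : α} (hx : x ∈ R) (p : ℝ) :
    ∑ Z ∈ R.powerset with x ∈ Z, bernoulliWeight R p Z = p := by
  have hmiss := sum_bernoulliWeight_disjoint (singleton_subset_iff.2 hx) p
  simp only [disjoint_singleton_left, card_singleton, pow_one] at hmiss
  have hsplit := sum_filter_add_sum_filter_not R.powerset (x ∈ ·) (bernoulliWeight R p)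
  rw [sum_bernoulliWeight, hmiss] at hsplit
  linarith

theorem sum_bernoulliWeight_mul_card (R : Finset α) (p : ℝ) :
    ∑ Z ∈ R.powerset, bernoulliWeight R p Z * #Z = p * #R :=
  calc ∑ Z ∈ R.powerset, bernoulliWeight R p Z * #Z
      = ∑ Z ∈ R.powerset, ∑ x ∈ Z, bernoulliWeight R p Z := by simp [mul_comm]
    _ = ∑ x ∈ R, ∑ Z ∈ R.powerset with x ∈ Z, bernoulliWeight R p Z :=
        sum_comm' fun Z x => by
          simp only [mem_powerset, mem_filter]
          exact ⟨fun h => ⟨⟨h.1, h.2⟩, h.1 h.2⟩, fun h => ⟨h.1.1, h.1.2⟩⟩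
    _ = ∑ x ∈ R, p := sum_congr rfl fun x hx => sum_bernoulliWeight_mem hx p
    _ = p * #R := by simp [mul_comm]

theorem sum_bernoulliWeight_mul_sum_disjoint_le {ι : Type*} {R : Finset α} {L : Finset ι}
    {S : ι → Finset α} (hSR : ∀ u ∈ L, S u ⊆ R) {p : ℝ} (hp0 : 0 < p) (hp1 : p ≤ 1) :
    ∑ Z ∈ R.powerset, bernoulliWeight R p Z * ∑ u ∈ L with Disjoint (S u) Z, (#(S u) : ℝ)
      ≤ #L / p :=
  calc ∑ Z ∈ R.powerset, bernoulliWeight R p Z * ∑ u ∈ L with Disjoint (S u) Z, (#(S u) : ℝ)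
      = ∑ u ∈ L, #(S u) * ∑ Z ∈ R.powerset with Disjoint (S u) Z, bernoulliWeight R p Z := by
        simp only [sum_filter, mul_sum, mul_ite, mul_zero]
        rw [sum_comm]
        simp only [mul_comm]
    _ = ∑ u ∈ L, #(S u) * (1 - p) ^ #(S u) :=
        sum_congr rfl fun u hu => by rw [sum_bernoulliWeight_disjoint (hSR u hu)]
    _ ≤ ∑ _u ∈ L, p⁻¹ := sum_le_sum fun u _ => natCast_mul_one_sub_pow_le_inv hp0 hp1 _
    _ = #L / p := by simp [div_eq_mul_inv]

end Bernoulli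

theorem exists_subset_card_le_and_sum_disjoint_le {α ι : Type*} [DecidableEq α]
    (R : Finset α) (L : Finset ι) (S : ι → Finset α) (hSR : ∀ u ∈ L, S u ⊆ R) {p : ℝ}
    (hp0 : 0 < p) (hp1 : p ≤ 1) :
    ∃ Z ⊆ R, (#Z : ℝ) ≤ 2 * (p * #R) ∧
      ∑ u ∈ L with Disjoint (S u) Z, (#(S u) : ℝ) ≤ 2 * (#L / p) := by
  obtain ⟨Z, hZ, hcard, hmissed⟩ := exists_le_two_mul_of_sum_mul_le
    (fun Z _ => bernoulliWeight_nonneg R hp0.le hp1 Z) (sum_bernoulliWeight R p)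
    (fun Z _ => Nat.cast_nonneg #Z) (fun Z _ => sum_nonneg fun u _ => Nat.cast_nonneg _)
    (sum_bernoulliWeight_mul_card R p).le (sum_bernoulliWeight_mul_sum_disjoint_le hSR hp0 hp1)
  exact ⟨Z, mem_powerset.1 hZ, hcard, hmissed⟩

theorem soft_hitting_set_exists_general
    {α : Type} {ι : Type} [DecidableEq α]
    (R : Finset α) (L : Finset ι) (N Δ : ℕ)
    (hN : R.card = N) (hΔ1 : 1 ≤ Δ)
    (S : ι → Finset α) (hSR : ∀ u ∈ L, S u ⊆ R) :
    ∃ Z : Finset α, Z ⊆ R ∧ (Z.card : ℝ) ≤ 3 * N / Δ ∧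
      (∑ u ∈ L.filter (fun u => S u ∩ Z = ∅), ((S u).card : ℝ)) ≤ 3 * Δ * L.card := by
  have hΔ : (1 : ℝ) ≤ Δ := by exact_mod_cast hΔ1
  obtain ⟨Z, hZR, hcard, hmissed⟩ := exists_subset_card_le_and_sum_disjoint_le R L S hSR
    (inv_pos.2 (zero_lt_one.trans_le hΔ)) (inv_le_one_of_one_le₀ hΔ)
  refine ⟨Z, hZR, ?_, ?_⟩
  · calc (#Z : ℝ) ≤ 2 * N / Δ := hcard.trans_eq (by rw [hN]; ring)
      _ ≤ 3 * N / Δ := by gcongr; norm_num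
  · simp_rw [← disjoint_iff_inter_eq_empty]
    refine hmissed.trans ?_
    rw [div_inv_eq_mul]
    have hΔL : (0 : ℝ) ≤ Δ * #L := by positivity
    linarith

/-- Let `R` be a finite set with `|R| = N`, `L` a finite index set,
`1 ≤ Δ ≤ N` an integer, and for each `u ∈ L` let `S u ⊆ R` with `|S u| ≥ Δ`. Then there is
a subset `Z ⊆ R` with `|Z| ≤ 3·N/Δ` such that the total size of the sets `S u` (for `u ∈ L`)
missed by `Z` is at most `3·Δ·|L|`. -/
theorem soft_hitting_set_exists
    {α : Type} {ι : Type} [DecidableEq α]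
    (R : Finset α) (L : Finset ι) (N Δ : ℕ)
    (hN : R.card = N) (hΔ1 : 1 ≤ Δ) (hΔN : Δ ≤ N)
    (S : ι → Finset α) (hSR : ∀ u ∈ L, S u ⊆ R) (hSΔ : ∀ u ∈ L, Δ ≤ (S u).card) :
    ∃ Z : Finset α, Z ⊆ R ∧ (Z.card : ℝ) ≤ 3 * N / Δ ∧
      (∑ u ∈ L.filter (fun u => S u ∩ Z = ∅), ((S u).card : ℝ)) ≤ 3 * Δ * L.card :=
  soft_hitting_set_exists_general R L N Δ hN hΔ1 S hSR
end

section
/- There exists an absolute constant C such that for every n-vertex unweighted undirected graph G = (V,E), every real 0 < ε < 1, and every integer t ≥ 2, there exists a weighted edge set H on V with at most C·n^{3/2}·log n edges which is a (β, ε, t)-hopset of G, where β = ⌈C·(log t)/ε⌉. -/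
/-!
Put `τ = ⌊√n⌋` and call a ball of radius `2 ^ j ≤ n` dense if it has more than `τ` vertices.
A greedy hitting set `S` of `O(√n log n)` hubs meets every dense ball. The hopset joins each hub
to every vertex, and each vertex `x` to every vertex of each sparse ball around `x`, by edges of
weight `d_G`: `O(n^{3/2} log n)` edges. For `u, v` at distance `d ≥ 2 / ε`, fix the scale
`r = 2 ^ j ∈ (ε d / 4, ε d / 2]` and walk towards `v`: at a vertex whose `r`-ball is dense, two
hops through a hub reach `v` with additive error `2 r ≤ ε d`; otherwise one hop advances `r`
along a geodesic. This takes at most `d / r + 2 ≤ 6 / ε` hops, and shorter distances are covered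
by the edges of `G`. So `O(1 / ε) ≤ C log t / ε` hops suffice.
-/

open scoped ENNReal

/-- The total weight of the walk that starts at `u` and successively visits the vertices of
`l`, where `step x y` is the cost of traversing the edge `{x,y}` (`∞` if there is none). -/
noncomputable def walkCost {V : Type*} (step : V → V → ℝ≥0∞) : V → List V → ℝ≥0∞
  | _, [] => 0
  | u, x :: l => step u x + walkCost step x l

/-- The `β`-hop-bounded weighted distance from `u` to `v`: the infimum total cost over walks
from `u` to `v` using at most `β` edges (`∞` if there is no such walk). -/
noncomputable def bddWDist {V : Type*} (step : V → V → ℝ≥0∞) (β : ℕ) (u v : V) : ℝ≥0∞ :=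
  ⨅ (l : List V) (_ : l.length ≤ β)
    (_ : (u :: l).getLast (List.cons_ne_nil u l) = v), walkCost step u l

open Classical in
/-- The cost of a single step in `G ∪ H`: an edge of `G` has weight `1`, and an edge of the
weighted edge set `H` (described by `w`, with `w u v = ∞` meaning no edge) has weight `w u v`;
the cheaper option is taken. -/
noncomputable def stepCost {V : Type*} (G : SimpleGraph V) (w : V → V → ℝ≥0∞) (u v : V) :
    ℝ≥0∞ :=
  min (if G.Adj u v then 1 else ⊤) (w u v)

open Finset

lemma List.getLast_cons_append {α : Type*} (u : α) (l₁ l₂ : List α) :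
    (u :: (l₁ ++ l₂)).getLast (List.cons_ne_nil _ _) =
      ((u :: l₁).getLast (List.cons_ne_nil _ _) :: l₂).getLast (List.cons_ne_nil _ _) := by
  induction l₁ generalizing u with
  | nil => rfl
  | cons x l ih => simp only [List.cons_append, List.getLast_cons_cons, ih]

section HopDistance

variable {V : Type*} (step : V → V → ℝ≥0∞)

lemma bddWDist_le_walkCost {β : ℕ} {u v : V} (l : List V) (hl : l.length ≤ β)
    (hlast : (u :: l).getLast (List.cons_ne_nil u l) = v) :
    bddWDist step β u v ≤ walkCost step u l :=
  (iInf_le _ l).trans <| (iInf_le _ hl).trans <| iInf_le _ hlast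

lemma walkCost_append (u : V) (l₁ l₂ : List V) :
    walkCost step u (l₁ ++ l₂) =
      walkCost step u l₁ + walkCost step ((u :: l₁).getLast (List.cons_ne_nil u l₁)) l₂ := by
  induction l₁ generalizing u with
  | nil => simp [walkCost]
  | cons x l ih => simp only [List.cons_append, walkCost, ih, List.getLast_cons_cons, add_assoc]

lemma bddWDist_add_le (β γ : ℕ) (u x v : V) :
    bddWDist step (β + γ) u v ≤ bddWDist step β u x + bddWDist step γ x v := by
  simp only [bddWDist, ENNReal.iInf_add, ENNReal.add_iInf]
  refine le_iInf fun l₂ => le_iInf fun hl₂ => le_iInf fun hv => le_iInf fun l₁ =>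
    le_iInf fun hl₁ => le_iInf fun hx => ?_
  subst hx hv
  rw [← walkCost_append]
  refine bddWDist_le_walkCost step _ (by simp; omega) ?_
  exact List.getLast_cons_append ..

lemma bddWDist_anti {β γ : ℕ} (h : β ≤ γ) (u v : V) :
    bddWDist step γ u v ≤ bddWDist step β u v :=
  iInf_mono fun _ => iInf_mono' fun hl => ⟨hl.trans h, le_rfl⟩

@[simp] lemma bddWDist_self (β : ℕ) (u : V) : bddWDist step β u u = 0 :=
  le_antisymm (bddWDist_le_walkCost step [] (Nat.zero_le _) rfl) bot_le

lemma bddWDist_one_le (u v : V) : bddWDist step 1 u v ≤ step u v := by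
  simpa [walkCost] using bddWDist_le_walkCost step [v] le_rfl rfl

lemma le_bddWDist {d : V → V → ℝ≥0∞} (hd_self : ∀ a, d a a = 0)
    (hd_triangle : ∀ a b c, d a c ≤ d a b + d b c) (hd_step : ∀ a b, d a b ≤ step a b)
    (β : ℕ) (u v : V) : d u v ≤ bddWDist step β u v := by
  suffices ∀ (l : List V) (u : V), d u ((u :: l).getLast (List.cons_ne_nil u l)) ≤ walkCost step u l
    from le_iInf fun l => le_iInf fun _ => le_iInf fun hv => hv ▸ this l u
  intro l
  induction l with
  | nil => simp [hd_self, walkCost]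
  | cons x l ih =>
    intro u
    rw [List.getLast_cons_cons]
    exact (hd_triangle _ x _).trans (add_le_add (hd_step u x) (ih x))

end HopDistance

namespace SimpleGraph

variable {V : Type*} (G : SimpleGraph V)

lemma bddWDist_stepCost_le_length (w : V → V → ℝ≥0∞) {u v : V} (p : G.Walk u v) :
    bddWDist (stepCost G w) p.length u v ≤ p.length := by
  induction p with
  | nil => simp
  | @cons u x v h p ih =>
    have hstep : stepCost G w u x ≤ 1 := (min_le_left _ _).trans (by simp [h])
    rw [Walk.length_cons, add_comm, Nat.cast_add, Nat.cast_one]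
    calc bddWDist (stepCost G w) (1 + p.length) u v
        ≤ bddWDist (stepCost G w) 1 u x + bddWDist (stepCost G w) p.length x v :=
          bddWDist_add_le _ _ _ _ _ _
      _ ≤ 1 + p.length := add_le_add ((bddWDist_one_le _ _ _).trans hstep) ih

lemma Reachable.bddWDist_stepCost_le_dist (w : V → V → ℝ≥0∞) {β : ℕ} {u v : V}
    (huv : G.Reachable u v) (hβ : G.dist u v ≤ β) :
    bddWDist (stepCost G w) β u v ≤ G.dist u v := by
  obtain ⟨p, hp⟩ := huv.exists_walk_length_eq_dist
  rw [← hp] at hβ ⊢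
  exact (bddWDist_anti _ hβ _ _).trans (G.bddWDist_stepCost_le_length w p)

lemma Reachable.dist_le_bddWDist_stepCost {w : V → V → ℝ≥0∞}
    (hw : ∀ a b, (G.edist a b : ℝ≥0∞) ≤ w a b) (β : ℕ) {u v : V} (huv : G.Reachable u v) :
    (G.dist u v : ℝ≥0∞) ≤ bddWDist (stepCost G w) β u v := by
  rw [← ENat.toENNReal_coe, huv.coe_dist_eq_edist]
  refine le_bddWDist _ (by simp) (fun a b c => ?_) (fun a b => le_min ?_ (hw a b)) β u v
  · rw [← ENat.toENNReal_add, ENat.toENNReal_le]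
    exact G.edist_triangle
  · split_ifs with h
    · simp [edist_eq_one_iff_adj.mpr h]
    · exact le_top

lemma Reachable.exists_dist_eq_sub {x v : V} (hxv : G.Reachable x v) {r : ℕ}
    (hr : r ≤ G.dist x v) :
    ∃ y, G.Reachable x y ∧ G.Reachable y v ∧ G.dist x y = r ∧ G.dist y v = G.dist x v - r := by
  obtain ⟨p, hp⟩ := hxv.exists_walk_length_eq_dist
  refine ⟨p.getVert r, ⟨p.take r⟩, ⟨p.drop r⟩, ?_, ?_⟩
  · rw [← length_eq_dist_of_subwalk hp (p.isSubwalk_take r)]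
    simp [hp, hr]
  · rw [← length_eq_dist_of_subwalk hp (p.isSubwalk_drop r)]
    simp [hp]

lemma Reachable.bddWDist_le_of_hub_or_local {c : V → V → ℝ≥0∞} {r : ℕ} (hr : 0 < r) {S : Set V}
    (hhub : ∀ a b, G.Reachable a b → (a ∈ S ∨ b ∈ S) → bddWDist c 1 a b ≤ G.dist a b)
    (hcover : ∀ x, (∃ s ∈ S, G.Reachable x s ∧ G.dist x s ≤ r) ∨
      ∀ y, G.Reachable x y → G.dist x y ≤ r → bddWDist c 1 x y ≤ G.dist x y)
    {x v : V} (hxv : G.Reachable x v) :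
    bddWDist c (G.dist x v / r + 2) x v ≤ G.dist x v + 2 * r := by
  obtain ⟨k, hk⟩ : ∃ k, G.dist x v = k := ⟨_, rfl⟩
  induction k using Nat.strong_induction_on generalizing x with
  | _ k ih =>
  rw [hk]
  rcases hcover x with ⟨s, hs, hxs, hdxs⟩ | hlocal
  · have hdsv : G.dist s v ≤ G.dist x s + k := by
      rw [← hk, G.dist_comm (u := x)]
      exact hxs.symm.dist_triangle_left v
    calc bddWDist c (k / r + 2) x v ≤ bddWDist c (1 + 1) x v :=
        bddWDist_anti _ le_add_self _ _
      _ ≤ bddWDist c 1 x s + bddWDist c 1 s v := bddWDist_add_le _ _ _ _ _ _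
      _ ≤ G.dist x s + G.dist s v :=
          add_le_add (hhub _ _ hxs (.inr hs)) (hhub _ _ (hxs.symm.trans hxv) (.inl hs))
      _ ≤ k + 2 * r := by exact_mod_cast (by omega : G.dist x s + G.dist s v ≤ k + 2 * r)
  by_cases hkr : k ≤ r
  · calc bddWDist c (k / r + 2) x v ≤ bddWDist c 1 x v :=
        bddWDist_anti _ (by simp) _ _
      _ ≤ G.dist x v := hlocal v hxv (hk ▸ hkr)
      _ ≤ k + 2 * r := by rw [hk]; exact le_self_add
  obtain ⟨y, hxy, hyv, hdxy, hdyv⟩ := hxv.exists_dist_eq_sub G (r := r) (by omega)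
  have hsplit : k / r + 2 = 1 + ((k - r) / r + 2) := by
    rw [Nat.div_eq_sub_div hr (by omega)]
    ring
  rw [hsplit]
  calc bddWDist c (1 + ((k - r) / r + 2)) x v
      ≤ bddWDist c 1 x y + bddWDist c ((k - r) / r + 2) y v := bddWDist_add_le _ _ _ _ _ _
    _ ≤ r + ((k - r : ℕ) + 2 * r) := by
        refine add_le_add ?_ (hk ▸ hdyv ▸ ih (k - r) (by omega) hyv (by omega))
        simpa [hdxy] using hlocal y hxy hdxy.le
    _ = k + 2 * r := by norm_cast; omega

end SimpleGraph

lemma Real.log_le_sub_of_le_mul_one_sub {a b q : ℝ} (ha : 0 < a) (hb : 0 ≤ b)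
    (hab : a ≤ b * (1 - q)) : Real.log a ≤ Real.log b - q := by
  have hexp : a ≤ b * Real.exp (-q) :=
    hab.trans (mul_le_mul_of_nonneg_left (by linarith [Real.add_one_le_exp (-q)]) hb)
  have hb : 0 < b := pos_of_mul_pos_left (ha.trans_le hexp) (Real.exp_pos _).le
  calc Real.log a ≤ Real.log (b * Real.exp (-q)) := Real.log_le_log ha hexp
    _ = Real.log b - q := by rw [Real.log_mul hb.ne' (Real.exp_pos _).ne', Real.log_exp]; ring

namespace Finset

variable {α : Type*} [Fintype α] [DecidableEq α]

lemma exists_card_mul_le_card_filter_mem [Nonempty α] {m : ℕ} {F : Finset (Finset α)}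
    (hF : ∀ A ∈ F, m ≤ #A) : ∃ x, #F * m ≤ Fintype.card α * #{A ∈ F | x ∈ A} := by
  have hdouble : ∑ A ∈ F, #A = ∑ x : α, #{A ∈ F | x ∈ A} := by
    simp only [card_filter]
    rw [sum_comm]
    simp
  have hsum : ∑ _x : α, #F * m ≤ ∑ x : α, Fintype.card α * #{A ∈ F | x ∈ A} := by
    rw [sum_const, card_univ, smul_eq_mul, ← mul_sum, ← hdouble, mul_comm #F]
    gcongr
    simpa [mul_comm] using sum_le_sum hF
  obtain ⟨x, -, hx⟩ := exists_le_of_sum_le univ_nonempty hsum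
  exact ⟨x, hx⟩

/-- Greedy hitting set: repeatedly pick an element lying in at least an `m / |α|` fraction of the
sets not yet hit, so that their number shrinks by a factor `1 - m / |α| ≤ exp (-m / |α|)`. -/
theorem exists_hitting_set {m : ℕ} (hm : 0 < m) (F : Finset (Finset α)) (hF : ∀ A ∈ F, m ≤ #A) :
    ∃ S : Finset α, (∀ A ∈ F, ∃ x ∈ S, x ∈ A) ∧
      (#S : ℝ) ≤ Fintype.card α / m * Real.log #F + 1 := by
  induction F using Finset.strongInduction with
  | H F ih =>
  rcases F.eq_empty_or_nonempty with rfl | ⟨A₀, hA₀⟩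
  · exact ⟨∅, by simp, by simp⟩
  have : Nonempty α := (card_pos.mp (hm.trans_le (hF A₀ hA₀))).to_type
  obtain ⟨x, hx⟩ := exists_card_mul_le_card_filter_mem hF
  set F' := {A ∈ F | x ∉ A}
  rcases F'.eq_empty_or_nonempty with hF'_empty | ⟨A₁, hA₁⟩
  · have hlog : 0 ≤ Fintype.card α / m * Real.log #F :=
      mul_nonneg (by positivity) (Real.log_natCast_nonneg _)
    refine ⟨{x}, fun A hA => ⟨x, mem_singleton_self x, ?_⟩, by simpa using hlog⟩
    by_contra hxA
    exact (filter_eq_empty_iff.mp hF'_empty) hA hxA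
  have hF'_ssub : F' ⊂ F := by
    have hdeg : #{A ∈ F | x ∈ A} ≠ 0 := by
      intro h0
      rw [h0, mul_zero] at hx
      exact (Nat.mul_pos (card_pos.mpr ⟨A₀, hA₀⟩) hm).ne' (Nat.le_zero.mp hx)
    obtain ⟨A, hA⟩ := card_ne_zero.mp hdeg
    exact filter_ssubset.mpr ⟨A, (mem_filter.mp hA).1, not_not.mpr (mem_filter.mp hA).2⟩
  obtain ⟨S', hS'_hit, hS'_card⟩ := ih F' hF'_ssub fun A hA => hF A (mem_filter.mp hA).1
  refine ⟨insert x S', fun A hA => ?_, ?_⟩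
  · by_cases hxA : x ∈ A
    · exact ⟨x, mem_insert_self x S', hxA⟩
    · obtain ⟨y, hy, hyA⟩ := hS'_hit A (mem_filter.mpr ⟨hA, hxA⟩)
      exact ⟨y, mem_insert_of_mem hy, hyA⟩
  have hn : (0 : ℝ) < Fintype.card α := by exact_mod_cast Fintype.card_pos
  have hsplit : (#{A ∈ F | x ∈ A} : ℝ) + #F' = #F := by
    exact_mod_cast card_filter_add_card_filter_not (s := F) (x ∈ ·)
  have hshrink : Real.log #F' ≤ Real.log #F - m / Fintype.card α := by
    refine Real.log_le_sub_of_le_mul_one_sub (by exact_mod_cast card_pos.mpr ⟨A₁, hA₁⟩)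
      (Nat.cast_nonneg _) ?_
    have hx' : (#F : ℝ) * m / Fintype.card α ≤ #{A ∈ F | x ∈ A} := by
      rw [div_le_iff₀ hn]
      exact_mod_cast (mul_comm (Fintype.card α) _).symm ▸ hx
    rw [mul_one_sub, mul_div_assoc']
    linarith
  calc (#(insert x S') : ℝ) ≤ #S' + 1 := by exact_mod_cast card_insert_le x S'
    _ ≤ Fintype.card α / m * (Real.log #F - m / Fintype.card α) + 1 + 1 := by
        have := mul_le_mul_of_nonneg_left hshrink (by positivity : (0 : ℝ) ≤ Fintype.card α / m)
        linarith
    _ = Fintype.card α / m * Real.log #F + 1 := by field_simp; ring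

end Finset

lemma Nat.log_two_add_one_le_three_mul_log {n : ℕ} (hn : 2 ≤ n) :
    (Nat.log 2 n + 1 : ℝ) ≤ 3 * Real.log n := by
  have hlog2 := Real.log_two_gt_d9
  have hlog2n : Real.log 2 ≤ Real.log n := Real.log_le_log (by norm_num) (by exact_mod_cast hn)
  have hJ : (Nat.log 2 n : ℝ) * Real.log 2 ≤ Real.log n := by
    rw [← Real.log_pow]
    exact Real.log_le_log (by positivity) (by exact_mod_cast Nat.pow_log_le_self 2 (by omega))
  nlinarith [(Nat.log 2 n).cast_nonneg (α := ℝ)]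

lemma hopset_size_le {n : ℕ} {s : ℝ} (hn : 2 ≤ n)
    (hs : s ≤ n / (Nat.sqrt n + 1 : ℕ) * Real.log (n * (Nat.log 2 n + 1) : ℕ) + 1) :
    2 * (s * n + (n * (Nat.log 2 n + 1) * Nat.sqrt n : ℕ)) ≤
      16 * (n : ℝ) ^ ((3 : ℝ) / 2) * Real.log n := by
  have hn' : (2 : ℝ) ≤ n := by exact_mod_cast hn
  set L := Real.log n
  have hL : Real.log 2 ≤ L := Real.log_le_log (by norm_num) hn'
  have hlog2 := Real.log_two_gt_d9
  have hsqrt : 1 ≤ √(n : ℝ) := Real.one_le_sqrt.mpr (by linarith)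
  have hpow : (n : ℝ) ^ ((3 : ℝ) / 2) = n * √n := by
    rw [show (3 : ℝ) / 2 = 1 + 1 / 2 by norm_num, Real.rpow_add (by linarith), Real.rpow_one,
      Real.sqrt_eq_rpow]
  have hτ : (Nat.sqrt n : ℝ) ≤ √n := Real.le_sqrt_of_sq_le (by exact_mod_cast Nat.sqrt_le' n)
  have hdiv : (n : ℝ) / (Nat.sqrt n + 1 : ℕ) ≤ √n := by
    have hlt : √(n : ℝ) < (Nat.sqrt n + 1 : ℕ) :=
      (Real.sqrt_lt' (by positivity)).mpr (by exact_mod_cast Nat.lt_succ_sqrt' n)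
    rw [div_le_iff₀ (by positivity)]
    nlinarith [Real.mul_self_sqrt (Nat.cast_nonneg n : (0 : ℝ) ≤ n)]
  have hJ := Nat.log_two_add_one_le_three_mul_log hn
  have hlogf : Real.log (n * (Nat.log 2 n + 1) : ℕ) ≤ 2 * L := by
    have hfn : n * (Nat.log 2 n + 1) ≤ n * n := Nat.mul_le_mul_left n (Nat.log_lt_self 2 (by omega))
    calc Real.log (n * (Nat.log 2 n + 1) : ℕ) ≤ Real.log ((n : ℝ) * n) :=
          Real.log_le_log (by positivity) (by exact_mod_cast hfn)
      _ = 2 * L := by rw [Real.log_mul (by positivity) (by positivity)]; ring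
  have hs' : s ≤ √n * (2 * L) + 1 := hs.trans (by gcongr)
  rw [hpow]
  push_cast
  have h1 : (n : ℝ) * (Nat.log 2 n + 1) * Nat.sqrt n ≤ n * (3 * L) * √n := by gcongr
  -- the total is at most `2 n (2 √n L + 1) + 6 n √n L ≤ 13 n √n L`
  have h2 : 2 * (n : ℝ) ≤ 3 * (n * √n * L) := by
    have : (2 : ℝ) / 3 ≤ √n * L := by nlinarith
    nlinarith
  nlinarith [mul_le_mul_of_nonneg_left hs' (by positivity : (0 : ℝ) ≤ n)]

namespace SimpleGraph

section DistWeight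

variable {V : Type*} (G : SimpleGraph V)

open Classical in
noncomputable def distWeight (P : Finset (V × V)) (a b : V) : ℝ≥0∞ :=
  if a ≠ b ∧ G.Reachable a b ∧ ((a, b) ∈ P ∨ (b, a) ∈ P) then G.dist a b else ⊤

variable {G}

lemma distWeight_comm (P : Finset (V × V)) (a b : V) :
    G.distWeight P a b = G.distWeight P b a := by
  unfold distWeight
  split_ifs with h₁ h₂ h₂
  · rw [dist_comm]
  · exact absurd ⟨h₁.1.symm, h₁.2.1.symm, h₁.2.2.symm⟩ h₂
  · exact absurd ⟨h₂.1.symm, h₂.2.1.symm, h₂.2.2.symm⟩ h₁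
  · rfl

lemma distWeight_pos (P : Finset (V × V)) (a b : V) : 0 < G.distWeight P a b := by
  unfold distWeight
  split_ifs with h
  · exact_mod_cast h.2.1.pos_dist_of_ne h.1
  · exact ENNReal.zero_lt_top

lemma edist_le_distWeight (P : Finset (V × V)) (a b : V) :
    (G.edist a b : ℝ≥0∞) ≤ G.distWeight P a b := by
  unfold distWeight
  split_ifs with h
  · rw [← h.2.1.coe_dist_eq_edist, ENat.toENNReal_coe]
  · exact le_top

lemma ncard_distWeight_ne_top_le (P : Finset (V × V)) :
    {p : V × V | G.distWeight P p.1 p.2 ≠ ⊤}.ncard ≤ 2 * #P := by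
  classical
  calc {p : V × V | G.distWeight P p.1 p.2 ≠ ⊤}.ncard ≤ #(P ∪ P.image Prod.swap) := by
        rw [← Set.ncard_coe_finset]
        refine Set.ncard_le_ncard (fun p hp => ?_) (finite_toSet _)
        simp only [distWeight, Set.mem_ofPred_eq, ite_ne_right_iff] at hp
        rcases hp.1.2.2 with h | h
        · exact mem_union_left _ h
        · exact mem_union_right _ (mem_image.mpr ⟨_, h, rfl⟩)
    _ ≤ #P + #P := (card_union_le _ _).trans (add_le_add le_rfl card_image_le)
    _ = 2 * #P := (two_mul _).symm

lemma distWeight_eq_top_of_subsingleton [Subsingleton V] (P : Finset (V × V)) (a b : V) :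
    G.distWeight P a b = ⊤ := by
  simp [distWeight, Subsingleton.elim a b]

lemma Reachable.bddWDist_stepCost_distWeight_le {P : Finset (V × V)} {a b : V}
    (hab : G.Reachable a b) (hP : (a, b) ∈ P ∨ (b, a) ∈ P) :
    bddWDist (stepCost G (G.distWeight P)) 1 a b ≤ G.dist a b := by
  rcases eq_or_ne a b with rfl | hne
  · simp
  refine (bddWDist_one_le _ a b).trans ((min_le_right _ _).trans ?_)
  simp [distWeight, hne, hab, hP]

end DistWeight

section Hopset

variable {V : Type*} [Fintype V] (G : SimpleGraph V)

lemma Reachable.dist_lt_card {u v : V} (h : G.Reachable u v) : G.dist u v < Fintype.card V := by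
  obtain ⟨p, hp, hlen⟩ := h.exists_path_of_dist
  exact hlen ▸ hp.length_lt

open Classical in
noncomputable def closedBall (x : V) (r : ℕ) : Finset V :=
  {y | G.Reachable x y ∧ G.dist x y ≤ r}

lemma mem_closedBall {x y : V} {r : ℕ} :
    y ∈ G.closedBall x r ↔ G.Reachable x y ∧ G.dist x y ≤ r := by
  simp [closedBall]

variable [DecidableEq V]

noncomputable def denseBalls (τ J : ℕ) : Finset (Finset V) :=
  {p ∈ (univ : Finset V) ×ˢ range (J + 1) | τ < #(G.closedBall p.1 (2 ^ p.2))}.image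
    fun p => G.closedBall p.1 (2 ^ p.2)

noncomputable def hopPairs (S : Finset V) (τ J : ℕ) : Finset (V × V) :=
  S ×ˢ univ ∪ {p ∈ (univ : Finset V) ×ˢ range (J + 1) | #(G.closedBall p.1 (2 ^ p.2)) ≤ τ}.biUnion
    fun p => {p.1} ×ˢ G.closedBall p.1 (2 ^ p.2)

variable {G}

lemma lt_card_of_mem_denseBalls {τ J : ℕ} {A : Finset V} (hA : A ∈ G.denseBalls τ J) :
    τ < #A := by
  obtain ⟨p, hp, rfl⟩ := mem_image.mp hA
  exact (mem_filter.mp hp).2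

lemma card_denseBalls_le (τ J : ℕ) : #(G.denseBalls τ J) ≤ Fintype.card V * (J + 1) :=
  card_image_le.trans <| (card_filter_le _ _).trans (by simp)

lemma card_hopPairs_le (S : Finset V) (τ J : ℕ) :
    #(G.hopPairs S τ J) ≤ #S * Fintype.card V + Fintype.card V * (J + 1) * τ := by
  refine (card_union_le _ _).trans (add_le_add (by simp) ?_)
  refine (card_biUnion_le_card_mul _ _ τ fun p hp => ?_).trans ?_
  · simpa using (mem_filter.mp hp).2
  · exact Nat.mul_le_mul_right _ ((card_filter_le _ _).trans (by simp))

variable {S : Finset V} {τ J : ℕ}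

lemma Reachable.bddWDist_hopPairs_le_of_mem_hubs {a b : V} (hab : G.Reachable a b)
    (h : a ∈ S ∨ b ∈ S) :
    bddWDist (stepCost G (G.distWeight (G.hopPairs S τ J))) 1 a b ≤ G.dist a b := by
  refine hab.bddWDist_stepCost_distWeight_le ?_
  rcases h with h | h
  · exact .inl (mem_union_left _ (mem_product.mpr ⟨h, mem_univ b⟩))
  · exact .inr (mem_union_left _ (mem_product.mpr ⟨h, mem_univ a⟩))

lemma exists_hub_or_bddWDist_hopPairs_le (hS : ∀ A ∈ G.denseBalls τ J, ∃ s ∈ S, s ∈ A) {j : ℕ}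
    (hj : j ≤ J) (x : V) :
    (∃ s ∈ (S : Set V), G.Reachable x s ∧ G.dist x s ≤ 2 ^ j) ∨
      ∀ y, G.Reachable x y → G.dist x y ≤ 2 ^ j →
        bddWDist (stepCost G (G.distWeight (G.hopPairs S τ J))) 1 x y ≤ G.dist x y := by
  have hxj : (x, j) ∈ (univ : Finset V) ×ˢ range (J + 1) := by simp; omega
  by_cases hdense : τ < #(G.closedBall x (2 ^ j))
  · obtain ⟨s, hs, hsx⟩ := hS _ (mem_image.mpr ⟨(x, j), mem_filter.mpr ⟨hxj, hdense⟩, rfl⟩)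
    exact .inl ⟨s, hs, G.mem_closedBall.mp hsx⟩
  · refine .inr fun y hxy hdxy => hxy.bddWDist_stepCost_distWeight_le (.inl ?_)
    refine mem_union_right _ (mem_biUnion.mpr ⟨(x, j), mem_filter.mpr ⟨hxj, not_lt.mp hdense⟩, ?_⟩)
    simp [mem_closedBall, hxy, hdxy]

lemma Reachable.bddWDist_hopPairs_le (hS : ∀ A ∈ G.denseBalls τ J, ∃ s ∈ S, s ∈ A)
    (hJ : Nat.log 2 (Fintype.card V) ≤ J) {ε : ℝ} (hε : 0 < ε) (hε1 : ε ≤ 1) {β : ℕ}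
    (hβ : 6 / ε ≤ β) {u v : V} (huv : G.Reachable u v) :
    bddWDist (stepCost G (G.distWeight (G.hopPairs S τ J))) β u v ≤
      ENNReal.ofReal (1 + ε) * G.dist u v := by
  set d := G.dist u v
  have h6ε : 6 ≤ 6 / ε := by rw [le_div_iff₀ hε]; linarith
  by_cases hshort : ε * d < 2
  · have hdβ : (d : ℝ) ≤ β := by
      have : (d : ℝ) ≤ 2 / ε := by rw [le_div_iff₀ hε]; linarith
      linarith [div_le_div_of_nonneg_right (by norm_num : (2 : ℝ) ≤ 6) hε.le]
    refine (huv.bddWDist_stepCost_le_dist G _ (by exact_mod_cast hdβ)).trans ?_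
    exact le_mul_of_one_le_left' (ENNReal.one_le_ofReal.mpr (by linarith))
  obtain ⟨j, hj_le, hj_gt⟩ := exists_nat_pow_near (x := ε * d / 2) (by linarith) one_lt_two
  have hjJ : j ≤ J := by
    have : (2 : ℝ) ^ j < Fintype.card V := by
      have : (d : ℝ) < Fintype.card V := by exact_mod_cast huv.dist_lt_card G
      nlinarith
    exact (Nat.le_log_of_pow_le one_lt_two (by exact_mod_cast this.le)).trans hJ
  have hhops : d / 2 ^ j + 2 ≤ β := by
    have h1 : ((d / 2 ^ j : ℕ) : ℝ) ≤ d / 2 ^ j := by exact_mod_cast Nat.cast_div_le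
    have h2 : (d : ℝ) / 2 ^ j ≤ 4 / ε := by
      rw [div_le_div_iff₀ (by positivity) hε, pow_succ] at *
      linarith
    have h3 : 4 / ε + 2 ≤ 6 / ε := by
      rw [div_add' _ _ _ hε.ne', div_le_div_iff_of_pos_right hε]
      linarith
    exact_mod_cast (show ((d / 2 ^ j + 2 : ℕ) : ℝ) ≤ β by push_cast; linarith)
  calc bddWDist (stepCost G (G.distWeight (G.hopPairs S τ J))) β u v
      ≤ bddWDist (stepCost G (G.distWeight (G.hopPairs S τ J))) (d / 2 ^ j + 2) u v :=
        bddWDist_anti _ hhops _ _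
    _ ≤ d + 2 * (2 ^ j : ℕ) :=
        huv.bddWDist_le_of_hub_or_local G (by positivity)
          (fun _ _ hab h => hab.bddWDist_hopPairs_le_of_mem_hubs h)
          (exists_hub_or_bddWDist_hopPairs_le hS hjJ)
    _ = ENNReal.ofReal ((d + 2 * 2 ^ j : ℕ) : ℝ) := by rw [ENNReal.ofReal_natCast]; push_cast; rfl
    _ ≤ ENNReal.ofReal ((1 + ε) * d) := ENNReal.ofReal_le_ofReal (by push_cast; linarith)
    _ = ENNReal.ofReal (1 + ε) * d := by
        rw [ENNReal.ofReal_mul (by linarith), ENNReal.ofReal_natCast]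

variable (G) in
lemma exists_hubs_ncard_distWeight_hopPairs_le :
    ∃ S : Finset V,
      (∀ A ∈ G.denseBalls (Fintype.card V).sqrt (Nat.log 2 (Fintype.card V)), ∃ s ∈ S, s ∈ A) ∧
      ({p : V × V | G.distWeight (G.hopPairs S (Fintype.card V).sqrt (Nat.log 2 (Fintype.card V)))
        p.1 p.2 ≠ ⊤}.ncard : ℝ) ≤
        16 * (Fintype.card V : ℝ) ^ ((3 : ℝ) / 2) * Real.log (Fintype.card V) := by
  set n := Fintype.card V
  set τ := n.sqrt
  set J := Nat.log 2 n
  obtain ⟨S, hS_hit, hS_card⟩ := exists_hitting_set τ.succ_pos (G.denseBalls τ J)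
    fun A hA => lt_card_of_mem_denseBalls hA
  refine ⟨S, hS_hit, ?_⟩
  rcases le_or_gt n 1 with hn | hn
  · have : Subsingleton V := Fintype.card_le_one_iff_subsingleton.mp hn
    simp only [distWeight_eq_top_of_subsingleton, ne_eq, not_true_eq_false, Set.ofPred_false,
      Set.ncard_empty, Nat.cast_zero]
    positivity
  have hlog : Real.log #(G.denseBalls τ J) ≤ Real.log (n * (J + 1) : ℕ) := by
    rcases Nat.eq_zero_or_pos #(G.denseBalls τ J) with h | h
    · rw [h, Nat.cast_zero, Real.log_zero]
      exact Real.log_natCast_nonneg _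
    · exact Real.log_le_log (by exact_mod_cast h) (by exact_mod_cast G.card_denseBalls_le τ J)
  calc _ ≤ ((2 * #(G.hopPairs S τ J) : ℕ) : ℝ) := by
        exact_mod_cast ncard_distWeight_ne_top_le _
    _ ≤ 2 * (#S * n + (n * (J + 1) * τ : ℕ)) := by
        push_cast
        exact_mod_cast Nat.mul_le_mul_left 2 (card_hopPairs_le S τ J)
    _ ≤ _ := hopset_size_le hn (hS_card.trans (by gcongr))

end Hopset

end SimpleGraph

/-- There is an absolute constant `C` such that for every `n`-vertex
unweighted undirected graph `G`, every `0 < ε < 1`, and every integer `t ≥ 2`, there is a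
weighted edge set `H` on `V` (symmetric positive weights `w`) with at most
`C·n^(3/2)·log n` edges (counted as ordered pairs) which is a `(β, ε, t)`-hopset of `G`
for `β = ⌈C·(log t)/ε⌉`: for all `u, v` with `d_G(u,v) ≤ t`,
`d_G(u,v) ≤ d^β_{G∪H}(u,v) ≤ (1+ε)·d_G(u,v)`. -/
theorem bounded_hopset_exists :
    ∃ C : ℝ, 0 < C ∧
      ∀ (V : Type) [Fintype V] (G : SimpleGraph V) (ε : ℝ) (t : ℕ),
        0 < ε → ε < 1 → 2 ≤ t →
        ∃ w : V → V → ℝ≥0∞,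
          (∀ u v, w u v = w v u) ∧ (∀ u v, 0 < w u v) ∧
          (({p : V × V | w p.1 p.2 ≠ ⊤}).ncard : ℝ) ≤
            C * (Fintype.card V : ℝ) ^ ((3 : ℝ) / 2) * Real.log (Fintype.card V) ∧
          ∀ u v : V, G.Reachable u v → G.dist u v ≤ t →
            (G.dist u v : ℝ≥0∞) ≤
                bddWDist (stepCost G w) ⌈C * Real.log t / ε⌉₊ u v ∧
              bddWDist (stepCost G w) ⌈C * Real.log t / ε⌉₊ u v ≤
                ENNReal.ofReal (1 + ε) * (G.dist u v : ℝ≥0∞) := by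
  refine ⟨16, by norm_num, fun V _ G ε t hε hε1 ht => ?_⟩
  classical
  obtain ⟨S, hS_hit, hS_card⟩ := G.exists_hubs_ncard_distWeight_hopPairs_le
  have hβ : 6 / ε ≤ ⌈16 * Real.log t / ε⌉₊ := by
    refine le_trans ?_ (Nat.le_ceil _)
    have : Real.log 2 ≤ Real.log t := Real.log_le_log (by norm_num) (by exact_mod_cast ht)
    gcongr
    linarith [Real.log_two_gt_d9]
  exact ⟨_, SimpleGraph.distWeight_comm _, SimpleGraph.distWeight_pos _, hS_card,
    fun u v huv _ => ⟨huv.dist_le_bddWDist_stepCost G (SimpleGraph.edist_le_distWeight _) _,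
      huv.bddWDist_hopPairs_le hS_hit le_rfl hε hε1.le hβ⟩⟩
end

section
/- Let G be an undirected graph on vertex set V, let A₁ ⊆ V, let t ≥ 1 be an integer, and for each vertex x with min_{a∈A₁} d_G(x,a) ≤ t fix a vertex p(x) ∈ A₁ attaining this minimum. Define the bounded bunch B_t(x) = ({u ∈ V : d_G(x,u) < min_{a∈A₁} d_G(x,a)} ∪ {p(x) if it is defined}) ∩ {u : d_G(x,u) ≤ t}. Then for every pair of vertices x, y with d_G(x,y) ≤ t, either y ∈ B_t(x), or there exists z ∈ A₁ ∩ B_t(x) with d_G(x,z) ≤ d_G(x,y). -/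
/-- Let `G` be an undirected graph on `V`, `A₁ ⊆ V`, `t ≥ 1` an integer,
and for each vertex `x` with `min_{a∈A₁} d_G(x,a) ≤ t` (distances in `ℕ∞`) let `p x ∈ A₁`
attain this minimum. Define the bounded bunch
`B x = ({u | d_G(x,u) < min_{a∈A₁} d_G(x,a)} ∪ {p x, if defined}) ∩ {u | d_G(x,u) ≤ t}`.
Then for every pair `x, y` with `d_G(x,y) ≤ t`, either `y ∈ B x`, or there is `z ∈ A₁ ∩ B x`
with `d_G(x,z) ≤ d_G(x,y)`. -/
theorem bounded_bunch_covering
    {V : Type*} (G : SimpleGraph V) (A₁ : Set V) (t : ℕ) (ht : 1 ≤ t)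
    (p : V → V)
    (hp : ∀ x : V, (⨅ a ∈ A₁, G.edist x a) ≤ (t : ℕ∞) →
      p x ∈ A₁ ∧ G.edist x (p x) = ⨅ a ∈ A₁, G.edist x a)
    (B : V → Set V)
    (hB : ∀ x : V, B x =
      ({u : V | G.edist x u < ⨅ a ∈ A₁, G.edist x a} ∪
        {u : V | (⨅ a ∈ A₁, G.edist x a) ≤ (t : ℕ∞) ∧ u = p x}) ∩
      {u : V | G.edist x u ≤ (t : ℕ∞)}) :
    ∀ x y : V, G.edist x y ≤ (t : ℕ∞) →
      y ∈ B x ∨ ∃ z ∈ A₁, z ∈ B x ∧ G.edist x z ≤ G.edist x y := by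
  intro x y hxy
  by_cases h : G.edist x y < ⨅ a ∈ A₁, G.edist x a
  · left
    rw [hB]
    exact ⟨Or.inl h, hxy⟩
  · right
    push_neg at h
    have hm : (⨅ a ∈ A₁, G.edist x a) ≤ (t : ℕ∞) := le_trans h hxy
    obtain ⟨hpA, hpd⟩ := hp x hm
    refine ⟨p x, hpA, ?_, ?_⟩
    · rw [hB]
      exact ⟨Or.inr ⟨hm, rfl⟩, by simpa [hpd] using hm⟩
    · rw [hpd]; exact h
end
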